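/- arXiv:2506.07622 — 2 statements merged into one kernel-verified Lean document; each statement's English description precedes it below -/
import Mathlib

section
/- Let N be a symmetric (1+k)×(1+k) real matrix with N₂₂ negative definite and N|N₂₂ ≥ 0, and let Γ := { γ ∈ ℝ^k : [1; γ]ᵀ N [1; γ] ≥ 0 }. Then for any fixed vector b ∈ ℝ^k, the infimum of γᵀb over γ ∈ Γ equals -N₁₂N₂₂⁻¹b - sqrt((N|N₂₂) · bᵀ(-N₂₂⁻¹)b). -/
/-! Completing the square turns the constraint into the ellipsoid
`(γ - c)ᵀ (-N₂₂) (γ - c) ≤ N|N₂₂` centred at `c = -N₂₂⁻¹ N₂₁`. On an ellipsoid `δᵀ M δ ≤ s` the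
linear functional `δ ↦ δᵀ b` is bounded below by `-√(s · bᵀ M⁻¹ b)`, by Cauchy–Schwarz for the
inner product defined by `M` applied to `δ` and `M⁻¹ b`; equality holds at a nonpositive multiple
of `M⁻¹ b`. -/

open Matrix

namespace Matrix

variable {n : Type*} [Fintype n]

lemma IsSymm.dotProduct_mulVec_comm {R : Type*} [CommSemiring R] {A : Matrix n n R}
    (hA : A.IsSymm) (x y : n → R) : x ⬝ᵥ A *ᵥ y = y ⬝ᵥ A *ᵥ x := by
  rw [dotProduct_mulVec, ← mulVec_transpose, hA.eq, dotProduct_comm]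

variable [DecidableEq n]

lemma mulVec_nonsing_inv_mulVec {R : Type*} [CommRing R] {A : Matrix n n R} (hA : IsUnit A.det)
    (v : n → R) : A *ᵥ (A⁻¹ *ᵥ v) = v := by
  rw [mulVec_mulVec, mul_nonsing_inv A hA, one_mulVec]

lemma inv_neg {R : Type*} [CommRing R] (A : Matrix n n R) : (-A)⁻¹ = -A⁻¹ := by
  by_cases hA : IsUnit A.det
  · exact inv_eq_left_inv (by rw [neg_mul_neg, nonsing_inv_mul A hA])
  · have hnA : ¬IsUnit (-A).det := by
      rwa [det_neg, IsUnit.mul_iff, and_iff_right (isUnit_neg_one.pow _)]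
    rw [nonsing_inv_apply_not_isUnit A hA, nonsing_inv_apply_not_isUnit _ hnA, neg_zero]

lemma dotProduct_mulVec_complete_square {R : Type*} [CommRing R] {A : Matrix n n R}
    (hA : A.IsSymm) (hdet : IsUnit A.det) (a : R) (v γ : n → R) :
    a + 2 * (v ⬝ᵥ γ) + γ ⬝ᵥ A *ᵥ γ =
      (a - v ⬝ᵥ A⁻¹ *ᵥ v) + (γ + A⁻¹ *ᵥ v) ⬝ᵥ A *ᵥ (γ + A⁻¹ *ᵥ v) := by
  have hAv := mulVec_nonsing_inv_mulVec hdet v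
  have hcross : A⁻¹ *ᵥ v ⬝ᵥ A *ᵥ γ = v ⬝ᵥ γ := by
    rw [hA.dotProduct_mulVec_comm, hAv, dotProduct_comm]
  simp only [mulVec_add, dotProduct_add, add_dotProduct, hAv, hcross, dotProduct_comm γ v,
    dotProduct_comm (A⁻¹ *ᵥ v) v]
  ring

namespace PosDef

variable {M : Matrix n n ℝ}

lemma sq_dotProduct_le (hM : M.PosDef) (x b : n → ℝ) :
    (x ⬝ᵥ b) ^ 2 ≤ (x ⬝ᵥ M *ᵥ x) * (b ⬝ᵥ M⁻¹ *ᵥ b) := by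
  have hMy := mulVec_nonsing_inv_mulVec hM.det_pos.ne'.isUnit b
  have hsymm : M.IsSymm := hM.isHermitian
  have hnonneg (y : n → ℝ) : 0 ≤ toBilin' M y y := by
    simpa [toBilin'_apply'] using hM.posSemidef.dotProduct_mulVec_nonneg y
  have hcs := LinearMap.BilinForm.apply_mul_apply_le_of_forall_zero_le _ hnonneg x (M⁻¹ *ᵥ b)
  simp only [toBilin'_apply'] at hcs
  rwa [hsymm.dotProduct_mulVec_comm (M⁻¹ *ᵥ b) x, hMy, dotProduct_comm (M⁻¹ *ᵥ b), ← sq] at hcs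

lemma isLeast_dotProduct_ellipsoid (hM : M.PosDef) {s : ℝ} (hs : 0 ≤ s) (c b : n → ℝ) :
    IsLeast ((· ⬝ᵥ b) '' {γ | (γ - c) ⬝ᵥ M *ᵥ (γ - c) ≤ s})
      (c ⬝ᵥ b - √(s * (b ⬝ᵥ M⁻¹ *ᵥ b))) := by
  set q := b ⬝ᵥ M⁻¹ *ᵥ b
  have hq : 0 ≤ q := by simpa using hM.inv.posSemidef.dotProduct_mulVec_nonneg b
  constructor
  · -- when `q = 0` (i.e. `b = 0`) the junk value `√0 / 0 = 0` gives the witness `c`, which works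
    set t := √(s * q) / q
    have htq : t * q = √(s * q) :=
      div_mul_cancel_of_imp fun h => by rw [h, mul_zero, Real.sqrt_zero]
    have hMy := mulVec_nonsing_inv_mulVec hM.det_pos.ne'.isUnit b
    refine ⟨c - t • M⁻¹ *ᵥ b, ?_, ?_⟩
    · have hval :
          (c - t • M⁻¹ *ᵥ b - c) ⬝ᵥ M *ᵥ (c - t • M⁻¹ *ᵥ b - c) = t * √(s * q) := by
        rw [sub_sub_cancel_left, mulVec_neg, neg_dotProduct_neg, mulVec_smul, hMy,
          smul_dotProduct, dotProduct_smul, dotProduct_comm _ b, smul_eq_mul, smul_eq_mul, ← htq]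
      show _ ≤ s
      rw [hval, div_mul_eq_mul_div, Real.mul_self_sqrt (mul_nonneg hs hq)]
      exact div_le_of_le_mul₀ hq hs le_rfl
    · show (c - t • M⁻¹ *ᵥ b) ⬝ᵥ b = _
      rw [sub_dotProduct, smul_dotProduct, dotProduct_comm (M⁻¹ *ᵥ b), smul_eq_mul, htq]
  · rintro _ ⟨γ, hγ, rfl⟩
    have hcs : ((γ - c) ⬝ᵥ b) ^ 2 ≤ s * q :=
      (hM.sq_dotProduct_le _ b).trans (mul_le_mul_of_nonneg_right hγ hq)
    have hlower := neg_le_of_abs_le (Real.abs_le_sqrt hcs)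
    rw [sub_dotProduct] at hlower
    linarith

end PosDef
end Matrix

/-- Closed form for the infimum of γᵀb over
Γ = {γ | [1;γ]ᵀN[1;γ] ≥ 0}: inf = -N12N22⁻¹b - √((N|N22)·bᵀ(-N22⁻¹)b). -/
theorem stmt4 {k : ℕ}
    (N11 : ℝ) (N21 : Fin k → ℝ) (N22 : Matrix (Fin k) (Fin k) ℝ)
    (hN22 : (-N22).PosDef)
    (hschur : 0 ≤ N11 - N21 ⬝ᵥ N22⁻¹.mulVec N21)
    (b : Fin k → ℝ) :
    IsGLB ((fun γ => γ ⬝ᵥ b) ''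
        {γ : Fin k → ℝ | 0 ≤ N11 + 2 * (N21 ⬝ᵥ γ) + γ ⬝ᵥ N22.mulVec γ})
      (-(N21 ⬝ᵥ N22⁻¹.mulVec b) -
        Real.sqrt ((N11 - N21 ⬝ᵥ N22⁻¹.mulVec N21) * (b ⬝ᵥ (-N22⁻¹).mulVec b))) := by
  have hsymm : N22.IsSymm := by simpa using (hN22.isHermitian : (-N22).IsSymm).neg
  have hdet : IsUnit N22.det := (isUnit_iff_isUnit_det N22).mp (by simpa using hN22.isUnit.neg)
  set c := -(N22⁻¹ *ᵥ N21)
  have hΓ : {γ : Fin k → ℝ | 0 ≤ N11 + 2 * (N21 ⬝ᵥ γ) + γ ⬝ᵥ N22 *ᵥ γ} =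
      {γ | (γ - c) ⬝ᵥ (-N22) *ᵥ (γ - c) ≤ N11 - N21 ⬝ᵥ N22⁻¹ *ᵥ N21} := by
    ext γ
    rw [Set.mem_ofPred, Set.mem_ofPred, dotProduct_mulVec_complete_square hsymm hdet,
      sub_neg_eq_add, neg_mulVec, dotProduct_neg, neg_le_iff_add_nonneg]
  have hc : c ⬝ᵥ b = -(N21 ⬝ᵥ N22⁻¹ *ᵥ b) := by
    rw [neg_dotProduct, dotProduct_comm, hsymm.inv.dotProduct_mulVec_comm]
  rw [hΓ, ← hc, ← Matrix.inv_neg]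
  exact (hN22.isLeast_dotProduct_ellipsoid hschur c b).isGLB
end

section
/- Let N be symmetric (1+k)×(1+k) with N₂₂ negative definite and N|N₂₂ ≥ 0, Γ := { γ : [1;γ]ᵀN[1;γ] ≥ 0 }. For λ ≥ 0 define N_λ := N + [[4λ(1+λ)(N|N₂₂), 0],[0, 0]] and Γ_λ := { γ : [1;γ]ᵀN_λ[1;γ] ≥ 0 }. Then for every b ∈ ℝ^k, sup_{γ∈Γ} γᵀb + λ·(sup_{γ∈Γ} γᵀb - inf_{γ∈Γ} γᵀb) = sup_{γ∈Γ_λ} γᵀb. -/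
/-!
Completing the square with `c = -N22⁻¹ N21` turns `Γ` into the ellipsoid
`(γ - c)ᵀ (-N22) (γ - c) ≤ S`, where `S = N|N22` is the Schur complement. By Cauchy–Schwarz in
the inner product of `-N22`, with equality along `(-N22)⁻¹ b`, the functional `γ ↦ γᵀ b` maps
this ellipsoid onto the interval with centre `cᵀ b` and half-width `√(S · bᵀ (-N22)⁻¹ b)`.
Adding `4λ(1+λ) S` to `N11` replaces `S` by `(1 + 2λ)² S`, so the half-width grows by the
factor `1 + 2λ`, which is exactly `sup + λ (sup - inf)`.
-/

open Matrix Set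

namespace Matrix

variable {n : Type*} [Fintype n]

theorem IsSymm.complete_square {A : Matrix n n ℝ} (hA : A.IsSymm)
    {c d : n → ℝ} (hc : A *ᵥ c = -d) (a : ℝ) (γ : n → ℝ) :
    a + 2 * (d ⬝ᵥ γ) + γ ⬝ᵥ A *ᵥ γ = a + d ⬝ᵥ c + (γ - c) ⬝ᵥ A *ᵥ (γ - c) := by
  have hcγ : c ⬝ᵥ A *ᵥ γ = -(d ⬝ᵥ γ) := by
    rw [dotProduct_mulVec, ← mulVec_transpose, hA.eq, hc, neg_dotProduct]
  simp only [mulVec_sub, dotProduct_sub, sub_dotProduct, hcγ, hc, dotProduct_neg,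
    dotProduct_comm γ d, dotProduct_comm c d]
  ring

theorem IsSymm.setOf_nonneg_quadratic_eq {A : Matrix n n ℝ} (hA : A.IsSymm)
    {c d : n → ℝ} (hc : A *ᵥ c = -d) (a : ℝ) :
    {γ | 0 ≤ a + 2 * (d ⬝ᵥ γ) + γ ⬝ᵥ A *ᵥ γ} =
      {γ | (γ - c) ⬝ᵥ (-A) *ᵥ (γ - c) ≤ a + d ⬝ᵥ c} := by
  ext γ
  simp only [mem_ofPred, hA.complete_square hc, neg_mulVec, dotProduct_neg]
  constructor <;> intro h <;> linarith

variable [DecidableEq n]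

theorem PosSemidef.dotProduct_mulVec_sq_le {M : Matrix n n ℝ} (hM : M.PosSemidef)
    (x y : n → ℝ) : (x ⬝ᵥ M *ᵥ y) ^ 2 ≤ (x ⬝ᵥ M *ᵥ x) * (y ⬝ᵥ M *ᵥ y) := by
  simpa only [toBilin'_apply'] using (toBilin' M).apply_sq_le_of_symm
    (by simpa [toBilin'_apply'] using hM.dotProduct_mulVec_nonneg)
    (LinearMap.BilinForm.isSymm_iff.1 <|
      isSymm_toBilin'_iff_isSymm.2 (isHermitian_iff_isSymm.1 hM.isHermitian)) x y

theorem PosDef.dotProduct_inv_mulVec_nonneg {M : Matrix n n ℝ} (hM : M.PosDef) (b : n → ℝ) :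
    0 ≤ b ⬝ᵥ M⁻¹ *ᵥ b := by
  simpa using hM.inv.posSemidef.dotProduct_mulVec_nonneg b

theorem PosDef.mulVec_inv_mulVec {M : Matrix n n ℝ} (hM : M.PosDef) (b : n → ℝ) :
    M *ᵥ M⁻¹ *ᵥ b = b := by
  rw [mulVec_mulVec, mul_nonsing_inv M hM.det_pos.ne'.isUnit, one_mulVec]

theorem PosDef.dotProduct_sq_le {M : Matrix n n ℝ} (hM : M.PosDef) (x b : n → ℝ) :
    (x ⬝ᵥ b) ^ 2 ≤ (x ⬝ᵥ M *ᵥ x) * (b ⬝ᵥ M⁻¹ *ᵥ b) := by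
  simpa only [hM.mulVec_inv_mulVec, dotProduct_comm (M⁻¹ *ᵥ b) b] using
    hM.posSemidef.dotProduct_mulVec_sq_le x (M⁻¹ *ᵥ b)

-- The bound of `PosDef.dotProduct_sq_le` is attained along `M⁻¹ *ᵥ b`.
theorem PosDef.exists_dotProduct_eq {M : Matrix n n ℝ} (hM : M.PosDef) {s t : ℝ} (hs : 0 ≤ s)
    (b : n → ℝ) (ht : t ^ 2 ≤ s * (b ⬝ᵥ M⁻¹ *ᵥ b)) :
    ∃ x, x ⬝ᵥ M *ᵥ x ≤ s ∧ x ⬝ᵥ b = t := by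
  set q := b ⬝ᵥ M⁻¹ *ᵥ b
  have hq : M⁻¹ *ᵥ b ⬝ᵥ M *ᵥ M⁻¹ *ᵥ b = q := by
    rw [hM.mulVec_inv_mulVec, dotProduct_comm]
  have hq_nonneg : 0 ≤ q := hM.dotProduct_inv_mulVec_nonneg b
  rcases hq_nonneg.eq_or_lt with hq0 | hq0
  · have : t = 0 := by rw [← hq0, mul_zero] at ht; exact (sq_nonpos_iff t).1 ht
    exact ⟨0, by simpa using hs, by simp [this]⟩
  · refine ⟨(t / q) • M⁻¹ *ᵥ b, ?_, ?_⟩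
    · rw [mulVec_smul, dotProduct_smul, smul_dotProduct, hq, smul_eq_mul, smul_eq_mul,
        ← mul_assoc, ← sq, div_pow, div_mul_eq_mul_div, sq q, mul_div_mul_right _ _ hq0.ne']
      exact div_le_of_le_mul₀ hq0.le hs ht
    · rw [smul_dotProduct, dotProduct_comm, smul_eq_mul, div_mul_cancel₀ _ hq0.ne']

theorem PosDef.image_dotProduct_ellipsoid {M : Matrix n n ℝ} (hM : M.PosDef) {s : ℝ}
    (hs : 0 ≤ s) (c b : n → ℝ) :
    (· ⬝ᵥ b) '' {γ | (γ - c) ⬝ᵥ M *ᵥ (γ - c) ≤ s} =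
      Icc (c ⬝ᵥ b - √(s * (b ⬝ᵥ M⁻¹ *ᵥ b))) (c ⬝ᵥ b + √(s * (b ⬝ᵥ M⁻¹ *ᵥ b))) := by
  have hsq : 0 ≤ s * (b ⬝ᵥ M⁻¹ *ᵥ b) := mul_nonneg hs (hM.dotProduct_inv_mulVec_nonneg b)
  ext v
  have hIcc : v ∈ Icc (c ⬝ᵥ b - √(s * (b ⬝ᵥ M⁻¹ *ᵥ b))) (c ⬝ᵥ b + √(s * (b ⬝ᵥ M⁻¹ *ᵥ b))) ↔
      (v - c ⬝ᵥ b) ^ 2 ≤ s * (b ⬝ᵥ M⁻¹ *ᵥ b) := by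
    rw [Real.sq_le hsq, mem_Icc, sub_le_iff_le_add', neg_le_sub_iff_le_add, sub_le_iff_le_add',
      add_comm (√_)]
  rw [hIcc]
  constructor
  · rintro ⟨γ, hγ, rfl⟩
    rw [← sub_dotProduct]
    exact (hM.dotProduct_sq_le _ b).trans
      (mul_le_mul_of_nonneg_right hγ (hM.dotProduct_inv_mulVec_nonneg b))
  · intro hv
    obtain ⟨x, hx, hxb⟩ := hM.exists_dotProduct_eq hs b hv
    refine ⟨c + x, ?_, show (c + x) ⬝ᵥ b = v from ?_⟩
    · rwa [mem_ofPred, add_sub_cancel_left]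
    · rw [add_dotProduct, hxb, add_sub_cancel]

theorem PosDef.sSup_image_dotProduct_ellipsoid {M : Matrix n n ℝ} (hM : M.PosDef) {s : ℝ}
    (hs : 0 ≤ s) (c b : n → ℝ) :
    sSup ((· ⬝ᵥ b) '' {γ | (γ - c) ⬝ᵥ M *ᵥ (γ - c) ≤ s}) =
      c ⬝ᵥ b + √(s * (b ⬝ᵥ M⁻¹ *ᵥ b)) := by
  rw [hM.image_dotProduct_ellipsoid hs,
    csSup_Icc (by linarith [Real.sqrt_nonneg (s * (b ⬝ᵥ M⁻¹ *ᵥ b))])]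

theorem PosDef.sInf_image_dotProduct_ellipsoid {M : Matrix n n ℝ} (hM : M.PosDef) {s : ℝ}
    (hs : 0 ≤ s) (c b : n → ℝ) :
    sInf ((· ⬝ᵥ b) '' {γ | (γ - c) ⬝ᵥ M *ᵥ (γ - c) ≤ s}) =
      c ⬝ᵥ b - √(s * (b ⬝ᵥ M⁻¹ *ᵥ b)) := by
  rw [hM.image_dotProduct_ellipsoid hs,
    csInf_Icc (by linarith [Real.sqrt_nonneg (s * (b ⬝ᵥ M⁻¹ *ᵥ b))])]

end Matrix

/-- For λ ≥ 0 and N_λ obtained from N by adding 4λ(1+λ)(N|N22) to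
the (1,1) entry, with Γ_λ = Z(N_λ), we have
sup_{γ∈Γ} γᵀb + λ(sup_{γ∈Γ} γᵀb - inf_{γ∈Γ} γᵀb) = sup_{γ∈Γ_λ} γᵀb. -/
theorem stmt6 {k : ℕ}
    (N11 : ℝ) (N21 : Fin k → ℝ) (N22 : Matrix (Fin k) (Fin k) ℝ)
    (hN22 : (-N22).PosDef)
    (hschur : 0 ≤ N11 - N21 ⬝ᵥ N22⁻¹.mulVec N21)
    (lam : ℝ) (hlam : 0 ≤ lam)
    (b : Fin k → ℝ) :
    let Γ : Set (Fin k → ℝ) :=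
      {γ | 0 ≤ N11 + 2 * (N21 ⬝ᵥ γ) + γ ⬝ᵥ N22.mulVec γ}
    let Γl : Set (Fin k → ℝ) :=
      {γ | 0 ≤ (N11 + 4 * lam * (1 + lam) * (N11 - N21 ⬝ᵥ N22⁻¹.mulVec N21)) +
            2 * (N21 ⬝ᵥ γ) + γ ⬝ᵥ N22.mulVec γ}
    sSup ((fun γ => γ ⬝ᵥ b) '' Γ) +
        lam * (sSup ((fun γ => γ ⬝ᵥ b) '' Γ) - sInf ((fun γ => γ ⬝ᵥ b) '' Γ)) =
      sSup ((fun γ => γ ⬝ᵥ b) '' Γl) := by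
  intro Γ Γl
  set S := N11 - N21 ⬝ᵥ N22⁻¹ *ᵥ N21
  set c := -(N22⁻¹ *ᵥ N21)
  have hsymm : N22.IsSymm := by simpa using hN22.isHermitian
  have hc : N22 *ᵥ c = -N21 := by
    have hunit : IsUnit N22.det := by simpa [det_neg] using hN22.det_pos.ne'.isUnit
    rw [mulVec_neg, mulVec_mulVec, mul_nonsing_inv N22 hunit, one_mulVec]
  have hS : ∀ a, a + N21 ⬝ᵥ c = a - N21 ⬝ᵥ N22⁻¹ *ᵥ N21 := fun a => by
    rw [dotProduct_neg, sub_eq_add_neg]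
  have hΓ : Γ = {γ | (γ - c) ⬝ᵥ (-N22) *ᵥ (γ - c) ≤ S} :=
    (hsymm.setOf_nonneg_quadratic_eq hc N11).trans (by rw [hS])
  have hΓl : Γl = {γ | (γ - c) ⬝ᵥ (-N22) *ᵥ (γ - c) ≤ (1 + 2 * lam) ^ 2 * S} :=
    (hsymm.setOf_nonneg_quadratic_eq hc _).trans (by rw [hS]; congr! 3; ring)
  have hSl : 0 ≤ (1 + 2 * lam) ^ 2 * S := by positivity
  rw [hΓ, hΓl, hN22.sSup_image_dotProduct_ellipsoid hschur,
    hN22.sInf_image_dotProduct_ellipsoid hschur, hN22.sSup_image_dotProduct_ellipsoid hSl,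
    mul_assoc, Real.sqrt_mul (sq_nonneg _), Real.sqrt_sq (by linarith)]
  ring
end
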